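/- For two Gaussians P = N(μ_i, σ_i²) and Q = N(μ_j, σ_j²), the CRPS divergence equals A(μ_i − μ_j, √(σ_i² + σ_j²)) − (σ_i + σ_j)/√π, where A(μ, σ) = 2σφ(μ/σ) + μ(2Φ(μ/σ) − 1). -/

import Mathlib

open MeasureTheory ProbabilityTheory Real

/-- standard normal density -/
noncomputable def stdGaussPDF (t : ℝ) : ℝ := (Real.sqrt (2 * Real.pi))⁻¹ * Real.exp (-(t ^ 2) / 2)

/-- standard normal cumulative distribution function -/
noncomputable def stdGaussCDF (z : ℝ) : ℝ := ∫ t in Set.Iio z, stdGaussPDF t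

/-- `A(μ, σ) = 2σφ(μ/σ) + μ(2Φ(μ/σ) − 1)` -/
noncomputable def A (μ σ : ℝ) : ℝ :=
  2 * σ * stdGaussPDF (μ / σ) + μ * (2 * stdGaussCDF (μ / σ) - 1)

/-! Under the product measure, `X - Y` is Gaussian with mean `μi - μj` and variance
`σi² + σj²` (convolution of Gaussians), so each of the three terms is a first absolute moment
`E|Z|` of a Gaussian. Writing `Z = m + s W` with `W` standard normal and splitting the line at the
root `-m/s` of `m + s t`, `E|Z|` reduces to integrals of `φ` and `t φ` over half-lines, and the
latter are evaluated with `φ' = -t φ`. The two self terms have `m = 0` and `s = √2 σ`, which gives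
`2σ/√π`. -/

open Set Filter Topology
open scoped NNReal

theorem stdGaussPDF_eq_gaussianPDFReal (t : ℝ) : stdGaussPDF t = gaussianPDFReal 0 1 t := by
  simp [stdGaussPDF, gaussianPDFReal]

theorem integrable_stdGaussPDF : Integrable stdGaussPDF := by
  simpa only [← funext stdGaussPDF_eq_gaussianPDFReal] using integrable_gaussianPDFReal 0 1

theorem integral_stdGaussPDF : ∫ t, stdGaussPDF t = 1 := by
  simpa only [← funext stdGaussPDF_eq_gaussianPDFReal] using
    integral_gaussianPDFReal_eq_one 0 one_ne_zero

theorem integrable_mul_stdGaussPDF : Integrable (fun t => t * stdGaussPDF t) := by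
  refine ((integrable_mul_exp_neg_mul_sq (b := 2⁻¹) (by norm_num)).const_mul (√(2 * π))⁻¹).congr
    (ae_of_all _ fun t => ?_)
  simp only [stdGaussPDF]
  ring_nf

theorem hasDerivAt_stdGaussPDF (t : ℝ) : HasDerivAt stdGaussPDF (-(t * stdGaussPDF t)) t := by
  have h : HasDerivAt (fun t : ℝ => -(t ^ 2) / 2) (-t) t :=
    ((hasDerivAt_pow 2 t).neg.div_const 2).congr_deriv (by ring)
  exact (h.exp.const_mul (√(2 * π))⁻¹).congr_deriv (by simp only [stdGaussPDF]; ring)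

theorem stdGaussPDF_neg (t : ℝ) : stdGaussPDF (-t) = stdGaussPDF t := by
  simp [stdGaussPDF]

theorem integral_Ioi_stdGaussPDF (a : ℝ) : ∫ t in Ioi a, stdGaussPDF t = 1 - stdGaussCDF a := by
  rw [← integral_stdGaussPDF, ← intervalIntegral.integral_Iic_add_Ioi
    integrable_stdGaussPDF.integrableOn integrable_stdGaussPDF.integrableOn, stdGaussCDF,
    integral_Iic_eq_integral_Iio]
  ring

theorem stdGaussCDF_neg (x : ℝ) : stdGaussCDF (-x) = 1 - stdGaussCDF x := by
  rw [← integral_Ioi_stdGaussPDF, stdGaussCDF, ← integral_Iic_eq_integral_Iio,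
    ← integral_comp_neg_Ioi]
  simp only [stdGaussPDF_neg]

theorem tendsto_stdGaussPDF_atTop : Tendsto stdGaussPDF atTop (𝓝 0) :=
  tendsto_zero_of_hasDerivAt_of_integrableOn_Ioi (a := 0) (fun x _ => hasDerivAt_stdGaussPDF x)
    integrable_mul_stdGaussPDF.neg.integrableOn integrable_stdGaussPDF.integrableOn

theorem tendsto_stdGaussPDF_atBot : Tendsto stdGaussPDF atBot (𝓝 0) :=
  tendsto_zero_of_hasDerivAt_of_integrableOn_Iic (a := 0) (fun x _ => hasDerivAt_stdGaussPDF x)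
    integrable_mul_stdGaussPDF.neg.integrableOn integrable_stdGaussPDF.integrableOn

theorem integral_Ioi_mul_stdGaussPDF (a : ℝ) :
    ∫ t in Ioi a, t * stdGaussPDF t = stdGaussPDF a := by
  rw [integral_Ioi_of_hasDerivAt_of_tendsto' (f := fun t => -stdGaussPDF t)
    (fun x _ => (hasDerivAt_stdGaussPDF x).neg.congr_deriv (neg_neg _))
    integrable_mul_stdGaussPDF.integrableOn (by simpa using tendsto_stdGaussPDF_atTop.neg)]
  ring

theorem integral_Iio_mul_stdGaussPDF (a : ℝ) :
    ∫ t in Iio a, t * stdGaussPDF t = -stdGaussPDF a := by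
  rw [← integral_Iic_eq_integral_Iio, integral_Iic_of_hasDerivAt_of_tendsto'
    (f := fun t => -stdGaussPDF t)
    (fun x _ => (hasDerivAt_stdGaussPDF x).neg.congr_deriv (neg_neg _))
    integrable_mul_stdGaussPDF.integrableOn (by simpa using tendsto_stdGaussPDF_atBot.neg)]
  ring

theorem integral_abs_add_mul_mul_stdGaussPDF (m : ℝ) {s : ℝ} (hs : 0 < s) :
    ∫ t, |m + s * t| * stdGaussPDF t = A m s := by
  set a := -(m / s)
  have hlin (S : Set ℝ) : ∫ t in S, (m + s * t) * stdGaussPDF t =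
      m * (∫ t in S, stdGaussPDF t) + s * ∫ t in S, t * stdGaussPDF t := by
    simp_rw [add_mul, mul_assoc]
    rw [integral_add (integrable_stdGaussPDF.const_mul m).integrableOn
      (integrable_mul_stdGaussPDF.const_mul s).integrableOn, integral_const_mul, integral_const_mul]
  have habs : Integrable (fun t => |m + s * t| * stdGaussPDF t) := by
    refine ((integrable_stdGaussPDF.const_mul m).add
      (integrable_mul_stdGaussPDF.const_mul s)).abs.congr (ae_of_all _ fun t => ?_)
    simp only [Pi.add_apply, ← mul_assoc, ← add_mul, abs_mul,
      abs_of_nonneg (show 0 ≤ stdGaussPDF t by unfold stdGaussPDF; positivity)]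
  have hroot (t : ℝ) : m + s * t = s * (t - a) := by
    simp only [a]
    field_simp
    ring
  have hIoi : ∫ t in Ioi a, |m + s * t| * stdGaussPDF t =
      m * (1 - stdGaussCDF a) + s * stdGaussPDF a := by
    rw [← integral_Ioi_stdGaussPDF, ← integral_Ioi_mul_stdGaussPDF, ← hlin]
    refine setIntegral_congr_fun measurableSet_Ioi fun t ht => ?_
    rw [hroot, abs_of_pos (mul_pos hs (sub_pos.2 ht))]
  have hIio : ∫ t in Iio a, |m + s * t| * stdGaussPDF t =
      -(m * stdGaussCDF a - s * stdGaussPDF a) := by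
    rw [← neg_neg (stdGaussPDF a), ← integral_Iio_mul_stdGaussPDF, stdGaussCDF, mul_neg,
      sub_neg_eq_add, ← hlin, ← integral_neg]
    refine setIntegral_congr_fun measurableSet_Iio fun t ht => ?_
    rw [hroot, abs_of_nonpos (mul_nonpos_of_nonneg_of_nonpos hs.le (sub_nonpos.2 ht.le)),
      neg_mul]
  rw [← intervalIntegral.integral_Iio_add_Ici habs.integrableOn habs.integrableOn,
    integral_Ici_eq_integral_Ioi, hIoi, hIio, stdGaussCDF_neg, stdGaussPDF_neg, A]
  ring

theorem A_zero_sqrt_add_self (v : ℝ) : A 0 √(v + v) = 2 * √v / √π := by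
  have hπ : 0 < √π := by positivity
  rw [A, zero_div, stdGaussPDF, ← two_mul, Real.sqrt_mul zero_le_two, Real.sqrt_mul zero_le_two]
  field_simp
  simp

namespace MeasureTheory.Measure

theorem map_sub_prod_eq_conv_map_neg {G : Type*} [AddGroup G] [MeasurableSpace G]
    [MeasurableAdd₂ G] [MeasurableNeg G] (μ ν : Measure G) [SFinite μ] [SFinite ν] :
    (μ.prod ν).map (fun p => p.1 - p.2) = μ ∗ ν.map Neg.neg := by
  rw [conv, ← map_id (μ := μ), map_prod_map _ _ measurable_id measurable_neg, map_id,
    map_map (by fun_prop) (by fun_prop)]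
  simp only [Function.comp_def, Prod.map, id, sub_eq_add_neg]

end MeasureTheory.Measure

namespace ProbabilityTheory

theorem gaussianReal_prod_map_sub (m₁ m₂ : ℝ) (v₁ v₂ : ℝ≥0) :
    ((gaussianReal m₁ v₁).prod (gaussianReal m₂ v₂)).map (fun p => p.1 - p.2) =
      gaussianReal (m₁ - m₂) (v₁ + v₂) := by
  rw [Measure.map_sub_prod_eq_conv_map_neg, gaussianReal_map_neg, gaussianReal_conv_gaussianReal,
    sub_eq_add_neg]

theorem gaussianReal_eq_map_affine (m : ℝ) (v : ℝ≥0) :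
    gaussianReal m v = (gaussianReal 0 1).map (fun t => m + √v * t) := by
  have hcomp : (fun t => m + √v * t) = (m + ·) ∘ (√v * ·) := rfl
  rw [hcomp, ← Measure.map_map (by fun_prop) (by fun_prop), gaussianReal_map_const_mul,
    gaussianReal_map_const_add]
  congr
  · ring
  · ext; simp

theorem integral_abs_gaussianReal (m : ℝ) {v : ℝ≥0} (hv : v ≠ 0) :
    ∫ x, |x| ∂gaussianReal m v = A m √v := by
  rw [gaussianReal_eq_map_affine, integral_map (by fun_prop) (by fun_prop),
    integral_gaussianReal_eq_integral_smul one_ne_zero]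
  simp_rw [← stdGaussPDF_eq_gaussianPDFReal, smul_eq_mul, mul_comm (stdGaussPDF _)]
  exact integral_abs_add_mul_mul_stdGaussPDF m
    (Real.sqrt_pos.2 (NNReal.coe_pos.2 (pos_iff_ne_zero.2 hv)))

theorem integral_abs_sub_prod_gaussianReal (m₁ m₂ : ℝ) {v₁ v₂ : ℝ≥0} (hv : v₁ + v₂ ≠ 0) :
    ∫ p, |p.1 - p.2| ∂(gaussianReal m₁ v₁).prod (gaussianReal m₂ v₂) =
      A (m₁ - m₂) √(v₁ + v₂ : ℝ) := by
  rw [← integral_map (φ := fun p : ℝ × ℝ => p.1 - p.2) (by fun_prop) (by fun_prop),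
    gaussianReal_prod_map_sub, integral_abs_gaussianReal _ hv, NNReal.coe_add]

end ProbabilityTheory

theorem crps_divergence_gaussians (μi μj σi σj : ℝ) (hσi : 0 < σi) (hσj : 0 < σj) :
    (∫ p : ℝ × ℝ, |p.1 - p.2|
        ∂((gaussianReal μi ⟨σi ^ 2, sq_nonneg σi⟩).prod (gaussianReal μj ⟨σj ^ 2, sq_nonneg σj⟩)))
      - (1 / 2) * (∫ p : ℝ × ℝ, |p.1 - p.2|
        ∂((gaussianReal μi ⟨σi ^ 2, sq_nonneg σi⟩).prod (gaussianReal μi ⟨σi ^ 2, sq_nonneg σi⟩)))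
      - (1 / 2) * (∫ p : ℝ × ℝ, |p.1 - p.2|
        ∂((gaussianReal μj ⟨σj ^ 2, sq_nonneg σj⟩).prod (gaussianReal μj ⟨σj ^ 2, sq_nonneg σj⟩))) =
      A (μi - μj) (Real.sqrt (σi ^ 2 + σj ^ 2)) - (σi + σj) / Real.sqrt Real.pi := by
  set vi : ℝ≥0 := ⟨σi ^ 2, sq_nonneg σi⟩
  set vj : ℝ≥0 := ⟨σj ^ 2, sq_nonneg σj⟩
  have hvi : (vi : ℝ) = σi ^ 2 := rfl
  have hvj : (vj : ℝ) = σj ^ 2 := rfl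
  have hvi_pos : 0 < vi := pow_pos hσi 2
  have hvj_pos : 0 < vj := pow_pos hσj 2
  rw [integral_abs_sub_prod_gaussianReal _ _ (add_pos hvi_pos hvj_pos).ne',
    integral_abs_sub_prod_gaussianReal _ _ (add_pos hvi_pos hvi_pos).ne',
    integral_abs_sub_prod_gaussianReal _ _ (add_pos hvj_pos hvj_pos).ne', sub_self, sub_self,
    A_zero_sqrt_add_self, A_zero_sqrt_add_self, hvi, hvj, Real.sqrt_sq hσi.le,
    Real.sqrt_sq hσj.le]
  ring
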